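/- The map $w \mapsto (I_{w,+}, I_{w,-})$, where $I_{w,+} = \mathbb{Z}_{>0} \cap w(\mathbb{Z}_{\le 0})$ and $I_{w,-} = \mathbb{Z}_{\le 0} \cap w(\mathbb{Z}_{>0})$, is a bijection from the set of 0-Grassmannian permutations of $\mathbb{Z}$ to the set of pairs of finite sets $(I_+, I_-)$ with $I_+ \subset \mathbb{Z}_{>0}$, $I_- \subset \mathbb{Z}_{\le 0}$ and $|I_+| = |I_-|$. -/

import Mathlib

/-- A permutation of `ℤ` moves only finitely many elements. -/
def FinSupp (w : Equiv.Perm ℤ) : Prop := {i : ℤ | w i ≠ i}.Finite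

/-- The Coxeter length of a permutation of `ℤ` = its number of inversions. -/
noncomputable def lenZ (w : Equiv.Perm ℤ) : ℕ :=
  Nat.card {p : ℤ × ℤ | p.1 < p.2 ∧ w p.2 < w p.1}

/-- `w` is 0-Grassmannian: `ℓ(w s_i) > ℓ(w)` for all `i ≠ 0`. -/
def IsZeroGrassmannian (w : Equiv.Perm ℤ) : Prop :=
  ∀ i : ℤ, i ≠ 0 → lenZ w < lenZ (w * Equiv.swap i (i + 1))

/-- `I_{w,+} = ℤ_{>0} ∩ w(ℤ_{≤0})`. -/
def Iplus (w : Equiv.Perm ℤ) : Set ℤ := {i : ℤ | 0 < i ∧ w.symm i ≤ 0}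

/-- `I_{w,-} = ℤ_{≤0} ∩ w(ℤ_{>0})`. -/
def Iminus (w : Equiv.Perm ℤ) : Set ℤ := {i : ℤ | i ≤ 0 ∧ 0 < w.symm i}

/-!
For finitely supported `w` one has `I_{w,+} = w(ℤ_{≤0}) \ ℤ_{≤0}` and
`I_{w,-} = ℤ_{≤0} \ w(ℤ_{≤0})`: the pair records exactly the set `w(ℤ_{≤0})`, and its two parts
have the same size because `w` permutes its finite support. Comparing inversion sets shows that
`w` is 0-Grassmannian iff `w i < w (i + 1)` for all `i ≠ 0`, i.e. iff `w` is increasing on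
`ℤ_{≤0}` and on `ℤ_{>0}`; then both halves of `w` are the increasing enumerations of `w(ℤ_{≤0})`
and of its complement, so `w` is determined by `w(ℤ_{≤0})`. Conversely every admissible pair comes
from `u(ℤ_{≤0})` for a product `u` of transpositions, and multiplying `u` on the right by a
descent `s_i` with `i ≠ 0`, which preserves `ℤ_{≤0}`, lowers the length until `u` is
0-Grassmannian.
-/

open Equiv Set

section FiniteSupport

variable {α : Type*} {σ τ : Perm α}

theorem finite_ne_self_mul (hσ : {x | σ x ≠ x}.Finite) (hτ : {x | τ x ≠ x}.Finite) :
    {x | (σ * τ) x ≠ x}.Finite :=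
  (hσ.union hτ).subset fun x hx => by
    by_contra h
    simp_all

theorem finite_ne_self_swap [DecidableEq α] (a b : α) : {x | swap a b x ≠ x}.Finite :=
  (toFinite {a, b}).subset fun x hx => by
    by_contra h
    simp only [mem_insert_iff, mem_singleton_iff, not_or] at h
    exact hx (swap_apply_of_ne_of_ne h.1 h.2)

theorem image_ne_self (σ : Perm α) : σ '' {x | σ x ≠ x} = {x | σ x ≠ x} := by
  rw [image_eq_preimage_symm]
  ext x
  simp [eq_symm_apply]

theorem image_sdiff_subset_ne_self (σ : Perm α) (s : Set α) : σ '' s \ s ⊆ {x | σ x ≠ x} := by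
  rintro _ ⟨⟨y, hy, rfl⟩, hys⟩ h
  exact hys (by rwa [σ.injective h])

theorem sdiff_image_subset_ne_self (σ : Perm α) (s : Set α) : s \ σ '' s ⊆ {x | σ x ≠ x} :=
  fun x ⟨hx, hxs⟩ h => hxs ⟨x, hx, h⟩

theorem ncard_image_sdiff (hσ : {x | σ x ≠ x}.Finite) (s : Set α) :
    (σ '' s \ s).ncard = (s \ σ '' s).ncard := by
  -- both differences live in the finite support, which `σ` maps onto itself
  have hsdiff {X Y : Set α} (h : X \ Y ⊆ {x | σ x ≠ x}) :
      X \ Y = (X ∩ {x | σ x ≠ x}) \ (Y ∩ {x | σ x ≠ x}) := by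
    rw [← inter_sdiff_distrib_right, inter_eq_left.2 h]
  rw [hsdiff (image_sdiff_subset_ne_self σ s), hsdiff (sdiff_image_subset_ne_self σ s),
    ← ncard_eq_ncard_iff_ncard_sdiff_eq_ncard_sdiff (hσ.subset inter_subset_right)
      (hσ.subset inter_subset_right),
    ← ncard_image_of_injective (s ∩ {x | σ x ≠ x}) σ.injective, image_inter σ.injective,
    image_ne_self]

theorem exists_image_eq_sdiff_union [DecidableEq α] {s M P : Set α} (hM : M.Finite)
    (hP : P.Finite) (hMs : M ⊆ s) (hPs : Disjoint P s) (hcard : M.ncard = P.ncard) :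
    ∃ u : Perm α, {x | u x ≠ x}.Finite ∧ u '' s = (s \ M) ∪ P := by
  induction M, hM using Set.Finite.induction_on generalizing P with
  | empty =>
    rw [ncard_empty, eq_comm, ncard_eq_zero hP] at hcard
    exact ⟨1, by simp, by simp [hcard]⟩
  | @insert m M hmM hM ih =>
    rw [ncard_insert_of_notMem hmM hM] at hcard
    obtain ⟨p, hp⟩ := nonempty_of_ncard_ne_zero (by omega : P.ncard ≠ 0)
    obtain ⟨u, hu, hus⟩ := ih (P := P \ {p}) hP.sdiff ((subset_insert m M).trans hMs)
      (hPs.mono_left sdiff_subset) (by rw [ncard_sdiff_singleton_of_mem hp]; omega)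
    have hms : m ∈ s := hMs (mem_insert m M)
    have hps : p ∉ s := hPs.notMem_of_mem_left hp
    refine ⟨swap m p * u, finite_ne_self_mul (finite_ne_self_swap m p) hu, ?_⟩
    rw [Perm.coe_mul, image_comp, hus,
      image_swap_of_mem_of_notMem (by simp [hms, hmM]) (by simp [hps])]
    ext x
    have := hPs.notMem_of_mem_left (a := x)
    by_cases hxm : x = m <;> by_cases hxp : x = p <;> simp_all

end FiniteSupport

section SetAlgebra

variable {α : Type*} {s M P : Set α}

theorem union_sdiff_self_of_disjoint (hPs : Disjoint P s) : (s \ M ∪ P) \ s = P := by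
  ext x
  have := hPs.notMem_of_mem_left (a := x)
  simp only [mem_sdiff, mem_union]
  tauto

theorem self_sdiff_union_of_subset (hMs : M ⊆ s) (hPs : Disjoint P s) : s \ (s \ M ∪ P) = M := by
  ext x
  have := hPs.notMem_of_mem_left (a := x)
  have := @hMs x
  simp only [mem_sdiff, mem_union]
  tauto

end SetAlgebra

def inversions (w : Perm ℤ) : Set (ℤ × ℤ) := {p | p.1 < p.2 ∧ w p.2 < w p.1}

theorem lenZ_eq_ncard_inversions (w : Perm ℤ) : lenZ w = (inversions w).ncard :=
  Nat.card_coe_set_eq _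

theorem inversions_subset_Icc_prod {w : Perm ℤ} {lo hi : ℤ}
    (h : {x | w x ≠ x} ⊆ Icc lo hi) : inversions w ⊆ Icc lo hi ×ˢ Icc lo hi := by
  have key (x : ℤ) : w x = x ∨ (lo ≤ x ∧ x ≤ hi ∧ lo ≤ w x ∧ w x ≤ hi) := by
    by_cases hx : w x = x
    · exact .inl hx
    · have := h (w.injective.ne hx)
      have := h hx
      simp_all
  rintro ⟨a, b⟩ ⟨hab, hba⟩
  simp only [mem_prod, mem_Icc] at hab hba ⊢
  rcases key a with ha | ha <;> rcases key b with hb | hb <;> omega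

theorem finite_inversions {w : Perm ℤ} (hw : FinSupp w) : (inversions w).Finite := by
  obtain ⟨lo, hlo⟩ := hw.bddBelow
  obtain ⟨hi, hhi⟩ := hw.bddAbove
  exact ((finite_Icc lo hi).prod (finite_Icc lo hi)).subset
    (inversions_subset_Icc_prod fun x hx => ⟨hlo hx, hhi hx⟩)

theorem lenZ_lt_lenZ_mul_swap {w : Perm ℤ} (hw : FinSupp w) {i : ℤ} (h : w i < w (i + 1)) :
    lenZ w < lenZ (w * swap i (i + 1)) := by
  set s := swap i (i + 1)
  have hfin : (inversions (w * s)).Finite :=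
    finite_inversions (finite_ne_self_mul hw (finite_ne_self_swap _ _))
  have hmem : (i, i + 1) ∈ inversions (w * s) := ⟨by omega, by simpa [s] using h⟩
  have hmaps : MapsTo (Prod.map s s) (inversions w) (inversions (w * s) \ {(i, i + 1)}) := by
    rintro ⟨a, b⟩ ⟨hab, hba⟩
    have hne : ¬(a = i ∧ b = i + 1) := by
      rintro ⟨rfl, rfl⟩
      exact hba.not_gt h
    simp only [inversions, Prod.map, mem_sdiff, mem_ofPred_eq, Perm.coe_mul, Function.comp_apply,
      s, swap_apply_self, mem_singleton_iff, Prod.mk.injEq]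
    refine ⟨⟨?_, hba⟩, ?_⟩ <;> simp only [swap_apply_def] <;> split_ifs <;> omega
  rw [lenZ_eq_ncard_inversions, lenZ_eq_ncard_inversions]
  calc (inversions w).ncard
      ≤ (inversions (w * s) \ {(i, i + 1)}).ncard :=
        ncard_le_ncard_of_injOn _ hmaps (Prod.map_injective.2 ⟨s.injective, s.injective⟩).injOn
          hfin.sdiff
    _ < (inversions (w * s)).ncard := ncard_sdiff_singleton_lt_of_mem hmem hfin

theorem lenZ_mul_swap_lt {w : Perm ℤ} (hw : FinSupp w) {i : ℤ} (h : w (i + 1) < w i) :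
    lenZ (w * swap i (i + 1)) < lenZ w := by
  simpa [mul_assoc] using
    lenZ_lt_lenZ_mul_swap (finite_ne_self_mul hw (finite_ne_self_swap i (i + 1)))
      (i := i) (by simpa using h)

theorem isZeroGrassmannian_iff {w : Perm ℤ} (hw : FinSupp w) :
    IsZeroGrassmannian w ↔ ∀ i, i ≠ 0 → w i < w (i + 1) := by
  refine ⟨fun hG i hi => ?_, fun h i hi => lenZ_lt_lenZ_mul_swap hw (h i hi)⟩
  refine (lt_or_gt_of_ne fun heq => ?_).resolve_right fun hlt => ?_
  · exact absurd (w.injective heq) (by omega)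
  · exact (hG i hi).not_gt (lenZ_mul_swap_lt hw hlt)

theorem image_swap_Iic_zero {i : ℤ} (hi : i ≠ 0) : swap i (i + 1) '' Iic 0 = Iic 0 := by
  rw [image_eq_preimage_symm, symm_swap]
  ext x
  simp only [mem_preimage, mem_Iic, swap_apply_def]
  split_ifs <;> omega

theorem exists_isZeroGrassmannian_image_Iic_eq {u : Perm ℤ} (hu : FinSupp u) :
    ∃ w, FinSupp w ∧ IsZeroGrassmannian w ∧ w '' Iic 0 = u '' Iic 0 := by
  induction h : lenZ u using Nat.strong_induction_on generalizing u with
  | _ n ih =>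
  by_cases hG : IsZeroGrassmannian u
  · exact ⟨u, hu, hG, rfl⟩
  obtain ⟨i, hi, hdesc⟩ : ∃ i, i ≠ 0 ∧ ¬u i < u (i + 1) := by
    simpa [isZeroGrassmannian_iff hu] using hG
  have hlt : u (i + 1) < u i := lt_of_le_of_ne (not_lt.1 hdesc) (u.injective.ne (by omega))
  obtain ⟨w, hw, hwG, hwu⟩ := ih _ (h ▸ lenZ_mul_swap_lt hu hlt)
    (finite_ne_self_mul hu (finite_ne_self_swap i (i + 1))) rfl
  refine ⟨w, hw, hwG, ?_⟩
  rw [hwu, Perm.coe_mul, image_comp, image_swap_Iic_zero hi]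

theorem strictAnti_apply_neg {w : Perm ℤ} (h : ∀ i, i ≠ 0 → w i < w (i + 1)) :
    StrictAnti fun n : ℕ => w (-n) :=
  strictAnti_nat_of_succ_lt fun n => by
    have h' := h (-(n + 1 : ℕ)) (by omega)
    rwa [show -((n + 1 : ℕ) : ℤ) + 1 = -n by omega] at h'

theorem strictMono_apply_succ {w : Perm ℤ} (h : ∀ i, i ≠ 0 → w i < w (i + 1)) :
    StrictMono fun n : ℕ => w (n + 1) :=
  strictMono_nat_of_lt_succ fun n => by
    simpa [add_assoc] using h (n + 1) (by omega)

theorem range_apply_neg (w : Perm ℤ) : range (fun n : ℕ => w (-n)) = w '' Iic 0 := by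
  rw [range_comp' w, show range (fun n : ℕ => -(n : ℤ)) = Iic 0 from ?_]
  ext x
  refine ⟨?_, fun hx => ⟨(-x).toNat, by rw [mem_Iic] at hx; dsimp only; omega⟩⟩
  rintro ⟨n, rfl⟩
  simp only [mem_Iic]
  omega

theorem range_apply_succ (w : Perm ℤ) : range (fun n : ℕ => w (n + 1)) = w '' Ioi 0 := by
  rw [range_comp' w, show range (fun n : ℕ => (n : ℤ) + 1) = Ioi 0 from ?_]
  ext x
  refine ⟨?_, fun hx => ⟨(x - 1).toNat, by rw [mem_Ioi] at hx; dsimp only; omega⟩⟩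
  rintro ⟨n, rfl⟩
  simp only [mem_Ioi]
  omega

theorem eq_of_image_Iic_eq {w w' : Perm ℤ} (hw : ∀ i, i ≠ 0 → w i < w (i + 1))
    (hw' : ∀ i, i ≠ 0 → w' i < w' (i + 1)) (h : w '' Iic 0 = w' '' Iic 0) : w = w' := by
  have hneg := ((strictAnti_apply_neg hw).dual_right.range_inj
    (strictAnti_apply_neg hw').dual_right).1 (by
      rw [range_comp, range_comp, range_apply_neg, range_apply_neg, h])
  have hpos := ((strictMono_apply_succ hw).range_inj (strictMono_apply_succ hw')).1 (by
      rw [range_apply_succ, range_apply_succ, ← compl_Iic, image_compl_eq w.bijective,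
        image_compl_eq w'.bijective, h])
  ext x
  rcases le_or_gt x 0 with hx | hx
  · have hx' : -((-x).toNat : ℤ) = x := by omega
    simpa only [Function.comp_apply, OrderDual.toDual_inj, hx'] using congrFun hneg (-x).toNat
  · have hx' : ((x - 1).toNat : ℤ) + 1 = x := by omega
    simpa only [hx'] using congrFun hpos (x - 1).toNat

theorem Iplus_eq (w : Perm ℤ) : Iplus w = w '' Iic 0 \ Iic 0 := by
  ext i
  simp only [Iplus, image_eq_preimage_symm, mem_sdiff, mem_preimage, mem_Iic, not_le]
  exact and_comm

theorem Iminus_eq (w : Perm ℤ) : Iminus w = Iic 0 \ w '' Iic 0 := by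
  ext i
  simp only [Iminus, image_eq_preimage_symm, mem_sdiff, mem_preimage, mem_Iic, not_le]
  rfl

theorem image_Iic_eq (w : Perm ℤ) : w '' Iic 0 = (Iic 0 \ Iminus w) ∪ Iplus w := by
  rw [Iplus_eq, Iminus_eq, sdiff_sdiff_right_self, inter_comm, inter_union_sdiff]

/-- The map `w ↦ (I_{w,+}, I_{w,-})` is a bijection from the 0-Grassmannian
permutations of `ℤ` to pairs of finite sets `(I₊, I₋)` with `I₊ ⊆ ℤ_{>0}`,
`I₋ ⊆ ℤ_{≤0}` and `|I₊| = |I₋|`. -/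
theorem grassmannian_to_sets_bijOn :
    Set.BijOn (fun w => (Iplus w, Iminus w))
      {w : Equiv.Perm ℤ | FinSupp w ∧ IsZeroGrassmannian w}
      {p : Set ℤ × Set ℤ | (∀ i ∈ p.1, 0 < i) ∧ (∀ i ∈ p.2, i ≤ 0) ∧
        p.1.Finite ∧ p.2.Finite ∧ Nat.card p.1 = Nat.card p.2} := by
  refine ⟨?_, ?_, ?_⟩
  · rintro w ⟨hw, -⟩
    refine ⟨fun i hi => hi.1, fun i hi => hi.1, ?_⟩
    dsimp only
    rw [Iplus_eq, Iminus_eq, Nat.card_coe_set_eq, Nat.card_coe_set_eq]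
    exact ⟨hw.subset (image_sdiff_subset_ne_self w _), hw.subset (sdiff_image_subset_ne_self w _),
      ncard_image_sdiff hw _⟩
  · rintro w ⟨hw, hwG⟩ w' ⟨hw', hwG'⟩ h
    obtain ⟨hp, hm⟩ := Prod.mk.inj h
    exact eq_of_image_Iic_eq ((isZeroGrassmannian_iff hw).1 hwG)
      ((isZeroGrassmannian_iff hw').1 hwG') (by rw [image_Iic_eq, image_Iic_eq, hp, hm])
  · rintro ⟨P, M⟩ ⟨hPpos, hMnonpos, hP, hM, hcard⟩
    have hMs : M ⊆ Iic 0 := hMnonpos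
    have hPs : Disjoint P (Iic 0) := disjoint_left.2 fun i hi hi' => (hPpos i hi).not_ge hi'
    obtain ⟨u, hu, hus⟩ := exists_image_eq_sdiff_union hM hP hMs hPs hcard.symm
    obtain ⟨w, hw, hwG, hwu⟩ := exists_isZeroGrassmannian_image_Iic_eq hu
    refine ⟨w, ⟨hw, hwG⟩, ?_⟩
    dsimp only
    rw [Iplus_eq, Iminus_eq, hwu, hus, union_sdiff_self_of_disjoint hPs,
      self_sdiff_union_of_subset hMs hPs]
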